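/- For all words u, v over a nonempty finite alphabet A, h(u·v) ≤ h(u) + h(v) − 1. -/

import Mathlib

/-!
Let `p = h u`, `q = h v` and `w ∼_{p+q-1} u v`. The key fact: if `s ⋢ x`, then some `t ⊑ v`
with `|t| < q` has `s t ⋢ x v`. Indeed, otherwise the last letter `a` of `s` must always be
matched inside `v`, so `a t ⊑ v` for every such `t`, i.e. `a v ∼_q v`, contradicting `h v = q`.

Cut `w = x y` with `x` the shortest prefix containing every subword of `u` of length `≤ p`.
By minimality `y` contains every subword of `v` of length `< q`, and the key fact then gives
`x ∼_p u`, so `x = u`. Mirroring, `w = w' v`; the key fact once more yields `w' ∼_p u`,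
so `w = u v`.
-/

/-- Simon's congruence of order `k`: `u` and `v` have the same subwords
(subsequences) of length at most `k`. -/
def SimonCong {A : Type*} (k : ℕ) (u v : List A) : Prop :=
  ∀ s : List A, s.length ≤ k → (s.Sublist u ↔ s.Sublist v)

/-- The subword distance `δ(u,v) = sup {k | u ∼ₖ v} ∈ ℕ ∪ {∞}`. -/
noncomputable def delta {A : Type*} (u v : List A) : ℕ∞ :=
  ⨆ k ∈ {k : ℕ | SimonCong k u v}, (k : ℕ∞)

/-- Right side distance `r(u,t) = δ(u, u·t)`. -/
noncomputable def sideR {A : Type*} (u t : List A) : ℕ∞ :=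
  delta u (u ++ t)

/-- Left side distance `ℓ(t,u) = δ(t·u, u)`. -/
noncomputable def sideL {A : Type*} (t u : List A) : ℕ∞ :=
  delta (t ++ u) u

/-- The piecewise complexity `h(u)`: the least `n` such that every word
`v` with `u ∼ₙ v` equals `u`. -/
noncomputable def pieceH {A : Type*} (u : List A) : ℕ :=
  sInf {n : ℕ | ∀ v : List A, SimonCong n u v → v = u}

/-- A word `u` is `m`-reduced if no strict subword of `u` is `∼ₘ`-equivalent to `u`. -/
def MReduced {A : Type*} (m : ℕ) (u : List A) : Prop :=
  ∀ u' : List A, u'.Sublist u → u' ≠ u → ¬ SimonCong m u' u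

/-- The piecewise minimality index `ρ(u)`: the least `m` such that `u` is `m`-reduced. -/
noncomputable def rho {A : Type*} (u : List A) : ℕ :=
  sInf {m : ℕ | MReduced m u}

open List

section

variable {A : Type*}

theorem SimonCong.symm {k : ℕ} {u v : List A} (h : SimonCong k u v) : SimonCong k v u :=
  fun s hs => (h s hs).symm

theorem SimonCong.reverse {k : ℕ} {u v : List A} (h : SimonCong k u v) :
    SimonCong k u.reverse v.reverse := by
  intro s hs
  rw [sublist_reverse_iff, sublist_reverse_iff]
  exact h s.reverse (by simpa using hs)

theorem eq_of_simonCong_length_succ {u w : List A} (h : SimonCong (u.length + 1) u w) :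
    w = u := by
  have huw : u <+ w := (h u (by omega)).mp (Sublist.refl u)
  have hwu : w.length ≤ u.length := by
    by_contra! hlt
    have := ((h _ (by simp)).mpr (take_sublist (u.length + 1) w)).length_le
    simp only [length_take] at this
    omega
  exact (huw.eq_of_length_le hwu).symm

theorem eq_of_simonCong_pieceH {u w : List A} (h : SimonCong (pieceH u) u w) : w = u :=
  Nat.sInf_mem (s := {n | ∀ v, SimonCong n u v → v = u})
    ⟨_, fun _ => eq_of_simonCong_length_succ⟩ w h

theorem pieceH_reverse_le (u : List A) : pieceH u.reverse ≤ pieceH u :=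
  Nat.sInf_le fun w hw => reverse_eq_iff.mp
    (eq_of_simonCong_pieceH (by simpa using hw.symm.reverse.symm))

theorem pieceH_reverse (u : List A) : pieceH u.reverse = pieceH u :=
  le_antisymm (pieceH_reverse_le u) (by simpa using pieceH_reverse_le u.reverse)

theorem cons_sublist_of_append_sublist_append {s t x y : List A} {a : A}
    (hs : ¬ s ++ [a] <+ x) (h : s ++ a :: t <+ x ++ y) : a :: t <+ y := by
  obtain ⟨l₁, l₂, hl, h₁, h₂⟩ := sublist_append_iff.mp h
  rcases append_eq_append_iff.mp hl.symm with ⟨m, -, rfl⟩ | ⟨m, rfl, hm⟩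
  · exact (sublist_append_right m _).trans h₂
  · cases m with
    | nil => simpa [hm] using h₂
    | cons b m =>
      obtain ⟨rfl, -⟩ := cons_eq_cons.mp hm
      exact absurd (((prefix_append (s ++ [a]) m).sublist).trans (by simpa using h₁)) hs

theorem sublist_drop_succ_of_append_sublist {s t w : List A} {k : ℕ}
    (hs : ¬ s <+ w.take k) (h : s ++ t <+ w) : t <+ w.drop (k + 1) := by
  obtain ⟨s, a, rfl⟩ :=
    (eq_nil_or_concat' s).resolve_left (by rintro rfl; exact hs (nil_sublist _))
  rw [← take_append_drop k w, append_assoc, singleton_append] at h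
  simpa using (cons_sublist_of_append_sublist_append hs h).tail

theorem exists_sublist_length_lt_pieceH_not_cons_sublist (v : List A) (a : A) :
    ∃ t, t <+ v ∧ t.length < pieceH v ∧ ¬ a :: t <+ v := by
  by_contra! h
  refine cons_ne_self a v (eq_of_simonCong_pieceH fun _ hs => ⟨fun hsv => hsv.cons a, ?_⟩)
  intro hsav
  rcases sublist_cons_iff.mp hsav with hsv | ⟨t, rfl, htv⟩
  · exact hsv
  · exact h t htv (by simpa using hs)

theorem pieceH_pos [Nonempty A] (v : List A) : 0 < pieceH v := by
  obtain ⟨t, -, ht, -⟩ :=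
    exists_sublist_length_lt_pieceH_not_cons_sublist v (Classical.arbitrary A)
  omega

theorem exists_sublist_length_lt_pieceH_not_append_sublist {s x : List A} (hs : ¬ s <+ x)
    (v : List A) : ∃ t, t <+ v ∧ t.length < pieceH v ∧ ¬ s ++ t <+ x ++ v := by
  obtain ⟨s, a, rfl⟩ :=
    (eq_nil_or_concat' s).resolve_left (by rintro rfl; exact hs (nil_sublist _))
  obtain ⟨t, htv, htl, hat⟩ := exists_sublist_length_lt_pieceH_not_cons_sublist v a
  refine ⟨t, htv, htl, fun h => hat ?_⟩
  rw [append_assoc, singleton_append] at h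
  exact cons_sublist_of_append_sublist_append hs h

theorem sublist_of_simonCong_append {p : ℕ} {s x y z v : List A}
    (H : SimonCong (p + pieceH v - 1) (x ++ v) (y ++ z))
    (hz : ∀ t, t <+ v → t.length < pieceH v → t <+ z) (hs : s.length ≤ p) (hsy : s <+ y) :
    s <+ x := by
  by_contra hsx
  obtain ⟨t, htv, htl, hst⟩ := exists_sublist_length_lt_pieceH_not_append_sublist hsx v
  exact hst ((H _ (by simp only [length_append]; omega)).mpr (hsy.append (hz t htv htl)))

theorem SimonCong.of_append_right {p : ℕ} {x y v : List A}
    (H : SimonCong (p + pieceH v - 1) (x ++ v) (y ++ v)) : SimonCong p x y := fun _ hs =>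
  ⟨sublist_of_simonCong_append H.symm (fun _ ht _ => ht) hs,
    sublist_of_simonCong_append H (fun _ ht _ => ht) hs⟩

theorem isPrefix_of_simonCong_append [Nonempty A] {u v w : List A}
    (H : SimonCong (pieceH u + pieceH v - 1) (u ++ v) w) : u <+: w := by
  classical
  have hv := pieceH_pos v
  have hP : ∃ k, ∀ s, s <+ u → s.length ≤ pieceH u → s <+ w.take k :=
    ⟨w.length, fun s hsu hs => by
      simpa using (H s (by omega)).mp (hsu.trans (sublist_append_left u v))⟩
  set k := Nat.find hP
  have hsuffix : ∀ t, t <+ v → t.length < pieceH v → t <+ w.drop k := by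
    intro t htv htl
    rcases Nat.eq_zero_or_pos k with hk | hk
    · simpa [hk] using (H t (by omega)).mp (htv.trans (sublist_append_right u v))
    · obtain ⟨s, hsu, hs, hsw⟩ :
          ∃ s, s <+ u ∧ s.length ≤ pieceH u ∧ ¬ s <+ w.take (k - 1) := by
        simpa using Nat.find_min hP (show k - 1 < k by omega)
      rw [show k = k - 1 + 1 by omega]
      exact sublist_drop_succ_of_append_sublist hsw
        ((H _ (by simp only [length_append]; omega)).mp (hsu.append htv))
  have hu : SimonCong (pieceH u) u (w.take k) := fun s hs =>
    ⟨fun hsu => Nat.find_spec hP s hsu hs,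
      sublist_of_simonCong_append (by rwa [take_append_drop]) hsuffix hs⟩
  exact eq_of_simonCong_pieceH hu ▸ take_prefix k w

theorem isSuffix_of_simonCong_append [Nonempty A] {u v w : List A}
    (H : SimonCong (pieceH u + pieceH v - 1) (u ++ v) w) : v <:+ w := by
  refine reverse_prefix.mp (isPrefix_of_simonCong_append (v := u.reverse) ?_)
  simpa [pieceH_reverse, add_comm] using H.reverse

end

theorem stmt12_general {A : Type*} [Nonempty A] (u v : List A) :
    pieceH (u ++ v) ≤ pieceH u + pieceH v - 1 := by
  refine Nat.sInf_le fun w hw => ?_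
  obtain ⟨w', rfl⟩ := isSuffix_of_simonCong_append hw
  rw [eq_of_simonCong_pieceH (SimonCong.of_append_right hw)]

theorem stmt12 {A : Type*} [Fintype A] [Nonempty A] (u v : List A) :
    pieceH (u ++ v) ≤ pieceH u + pieceH v - 1 :=
  stmt12_general u v
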